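/- (Theorem B, algebraic form.) Let k ≥ 1 and let a ∈ ℝ[z₁,…,z_d] satisfy a(1,…,1) = 2^d. Then all formal partial derivatives D^j a with multi-index j ∈ ℕ^d, |j| < k, vanish at every point ε ∈ Z' (condition Z_k) if and only if there exist polynomials c_w ∈ ℝ[z₁,…,z_d], indexed by the finitely many k-tuples w = (Θ₁,…,Θ_k) of d×d integer matrices with nonzero 0-1 columns and det Θ_i = ±1, such that a = Σ_w c_w · 2^d · ∏_{i=1}^{k} q_{Θ_i} and Σ_w c_w(1,…,1) = 1. -/

import Mathlib

/-!
Write `M_ε` for the maximal ideal of polynomials vanishing at `ε`. Expanding `a` in powers of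
`z - ε`, condition `Z_k` at `ε` says exactly that `a ∈ M_ε ^ k`. Every admissible `q_Θ`
vanishes on `Z'` (its matrix is invertible mod 2, so some column `θ` has `ε^θ = -1`), which
gives one direction.

For the other, let `J` be the ideal generated by the admissible `q_Θ`. It contains every
polynomial vanishing on `Z'`: modulo the ideal of the cube `{±1}^d`, which by the combinatorial
Nullstellensatz is generated by the `z_i² - 1`, such a polynomial is a multiple of `q_I`, the
indicator of `(1, …, 1)`; and `z_i² - 1 ∈ J` by induction on `d`, bordering admissible matrices
by a new row and column. As the `M_ε` are pairwise comaximal, `⋂ M_ε ^ k = (∏ M_ε) ^ k ⊆ J ^ k`,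
so `a ∈ J ^ k`, which is the required representation. The normalisation comes from evaluating
at `(1, …, 1)`, where every `q_Θ` equals `1`.
-/

open MvPolynomial

/-- For a `d×d` integer matrix `Θ` with 0-1 columns, the polynomial
`q_Θ(z) = ∏_{columns θ of Θ} (1 + z^θ)/2`, where `z^θ = z₁^{θ₁}⋯z_d^{θ_d}`. -/
noncomputable def qpoly {d : ℕ} (Θ : Matrix (Fin d) (Fin d) ℤ) : MvPolynomial (Fin d) ℝ :=
  ∏ c : Fin d, (C (1 / 2 : ℝ) * (1 + ∏ i : Fin d, X i ^ (Θ i c).toNat))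

/-- The iterated formal partial derivative `D^j = ∏_i (∂/∂z_i)^{j_i}` associated with a
multi-index `j ∈ ℕ^d` (the partial derivatives commute, so the order is irrelevant). -/
noncomputable def Dmulti {d : ℕ} (j : Fin d → ℕ) :
    Module.End ℝ (MvPolynomial (Fin d) ℝ) :=
  (List.finRange d).foldr (fun i op => ((pderiv i).toLinearMap ^ j i) * op) 1

theorem Ideal.apply_mem_pow_of_map_le {A B : Type*} [CommRing A] [CommRing B]
    (f : A →+* B) {I : Ideal A} {I' : Ideal B} (h : I.map f ≤ I') {k : ℕ} {a : A}
    (ha : a ∈ I ^ k) : f a ∈ I' ^ k :=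
  Ideal.pow_right_mono h k (Ideal.map_pow f I k ▸ Ideal.mem_map_of_mem f ha)

namespace MvPolynomial

section CommRing

variable {σ R : Type*} [CommRing R]

noncomputable def taylor (x : σ → R) : MvPolynomial σ R →ₐ[R] MvPolynomial σ R :=
  aeval fun i => X i + C (x i)

theorem taylor_X (x : σ → R) (i : σ) : taylor x (X i) = X i + C (x i) := aeval_X _ i

theorem constantCoeff_taylor (x : σ → R) (p : MvPolynomial σ R) :
    constantCoeff (taylor x p) = eval x p := by
  suffices (constantCoeff : MvPolynomial σ R →+* R).comp (taylor x) = eval x from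
    RingHom.congr_fun this p
  ext <;> simp [taylor_X]

theorem taylor_neg_taylor (x : σ → R) (p : MvPolynomial σ R) :
    taylor (-x) (taylor x p) = p := by
  suffices (taylor (-x)).comp (taylor x) = AlgHom.id R _ from AlgHom.congr_fun this p
  ext i
  simp [taylor_X]

theorem pderiv_taylor (x : σ → R) (i : σ) (p : MvPolynomial σ R) :
    pderiv i (taylor x p) = taylor x (pderiv i p) := by
  classical
  induction p using MvPolynomial.induction_on with
  | C a => simp [taylor]
  | add p q hp hq => simp only [map_add, hp, hq]
  | mul_X p n hp =>
    simp only [map_mul, pderiv_mul, taylor_X, hp, map_add, pderiv_C, pderiv_X, add_zero]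
    rw [Pi.single_apply]
    split_ifs <;> simp

theorem mem_idealOfVars_iff (p : MvPolynomial σ R) :
    p ∈ idealOfVars σ R ↔ constantCoeff p = 0 := by
  rw [constantCoeff_eq]
  simpa [Nat.lt_one_iff, Finsupp.degree_eq_zero_iff] using mem_pow_idealOfVars_iff' 1 p

theorem mem_ker_eval_pow_iff (x : σ → R) (k : ℕ) (p : MvPolynomial σ R) :
    p ∈ RingHom.ker (eval x) ^ k ↔ taylor x p ∈ idealOfVars σ R ^ k := by
  constructor
  · refine Ideal.apply_mem_pow_of_map_le (taylor x).toRingHom ?_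
    rw [Ideal.map_le_iff_le_comap]
    intro q hq
    simpa [mem_idealOfVars_iff, constantCoeff_taylor] using hq
  · intro hp
    rw [← taylor_neg_taylor x p]
    refine Ideal.apply_mem_pow_of_map_le (taylor (-x)).toRingHom ?_ hp
    rw [Ideal.map_le_iff_le_comap]
    intro q hq
    rw [mem_idealOfVars_iff] at hq
    have hinv := taylor_neg_taylor (-x) q
    rw [neg_neg] at hinv
    rwa [Ideal.mem_comap, RingHom.mem_ker, AlgHom.toRingHom_eq_coe, RingHom.coe_coe,
      ← constantCoeff_taylor, hinv]

end CommRing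

section CommSemiring

variable {σ R : Type*} [CommSemiring R]

theorem coeff_pderiv_pow (i : σ) (n : ℕ) (p : MvPolynomial σ R) (m : σ →₀ ℕ) :
    coeff m (((pderiv i).toLinearMap ^ n) p)
      = coeff (m + Finsupp.single i n) p * ((m i + n).descFactorial n : ℕ) := by
  induction n generalizing p with
  | zero => simp
  | succ n ih =>
    rw [pow_succ, Module.End.mul_apply, ih, Derivation.coeFn_coe, coeff_pderiv, add_assoc,
      ← Finsupp.single_add, ← add_assoc (m i), Nat.succ_descFactorial_succ]
    simp only [Finsupp.add_apply, Finsupp.single_eq_same]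
    push_cast
    ring

theorem coeff_foldr_pderiv_pow (j : σ → ℕ) {L : List σ} (hL : L.Nodup)
    (p : MvPolynomial σ R) (m : σ →₀ ℕ) :
    coeff m ((L.foldr (fun i op => ((pderiv i).toLinearMap ^ j i) * op)
        (1 : Module.End R (MvPolynomial σ R))) p)
      = coeff (m + (L.map fun t => Finsupp.single t (j t)).sum) p
        * (L.map fun t => ((m t + j t).descFactorial (j t) : R)).prod := by
  induction L generalizing m with
  | nil => simp
  | cons i L ih =>
    obtain ⟨hi, hL⟩ := List.nodup_cons.mp hL
    have hm : ∀ t ∈ L, (m + Finsupp.single i (j i)) t = m t := fun t ht => by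
      simp [(ne_of_mem_of_not_mem ht hi).symm]
    rw [List.foldr_cons, Module.End.mul_apply, coeff_pderiv_pow, ih hL,
      List.map_congr_left (l := L) (g := fun t => ((m t + j t).descFactorial (j t) : R))
        fun t ht => by rw [hm t ht]]
    simp only [List.map_cons, List.sum_cons, List.prod_cons, add_assoc]
    ring

end CommSemiring

theorem commute_pderiv_taylor {σ R : Type*} [CommRing R] (x : σ → R) (i : σ) :
    Commute ((pderiv i).toLinearMap : Module.End R (MvPolynomial σ R))
      (taylor x).toLinearMap :=
  LinearMap.ext (pderiv_taylor x i)

theorem mem_pow_of_forall_mem_ker_eval_pow {σ K : Type*} [Field K]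
    (s : Finset (σ → K)) {J : Ideal (MvPolynomial σ K)}
    (hJ : ∀ p, (∀ x ∈ s, eval x p = 0) → p ∈ J) (k : ℕ) {p : MvPolynomial σ K}
    (hp : ∀ x ∈ s, p ∈ RingHom.ker (eval x) ^ k) : p ∈ J ^ k := by
  have hmax (x : σ → K) : (RingHom.ker (eval x)).IsMaximal :=
    RingHom.ker_isMaximal_of_surjective _ fun c => ⟨C c, eval_C c⟩
  have hcop : (s : Set (σ → K)).Pairwise fun x y =>
      IsCoprime (RingHom.ker (eval x) ^ k) (RingHom.ker (eval y) ^ k) := by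
    intro x _ y _ hxy
    obtain ⟨i, hi⟩ := Function.ne_iff.mp hxy
    have hne : RingHom.ker (eval x) ≠ RingHom.ker (eval y) := fun h => by
      have : X i - C (x i) ∈ RingHom.ker (eval y) := h ▸ by simp
      simp [sub_eq_zero] at this
      exact hi this.symm
    exact (Ideal.isCoprime_of_isMaximal hne).pow
  have hprod : ∏ x ∈ s, RingHom.ker (eval x) ≤ J := Ideal.prod_le_inf.trans fun q hq =>
    hJ q fun x hx => (Finset.inf_le hx : s.inf (fun y => RingHom.ker (eval y)) ≤ _) hq
  have : p ∈ ∏ x ∈ s, RingHom.ker (eval x) ^ k := by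
    rw [Ideal.prod_eq_iInf_of_pairwise_isCoprime hcop]
    simpa [Submodule.mem_iInf] using hp
  rw [Finset.prod_pow] at this
  exact Ideal.pow_right_mono hprod k this

end MvPolynomial

theorem coeff_zero_Dmulti {d : ℕ} (j : Fin d → ℕ) (p : MvPolynomial (Fin d) ℝ) :
    coeff 0 (Dmulti j p)
      = (∏ i, ((j i).factorial : ℝ)) * coeff (Finsupp.equivFunOnFinite.symm j) p := by
  rw [Dmulti, coeff_foldr_pderiv_pow j (List.nodup_finRange d), ← Fin.prod_univ_def,
    Finsupp.equivFunOnFinite_symm_eq_sum, Fin.sum_univ_def]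
  simp [mul_comm, Nat.descFactorial_self]

theorem commute_Dmulti_taylor {d : ℕ} (x : Fin d → ℝ) (j : Fin d → ℕ) :
    Commute (Dmulti j) (taylor x).toLinearMap := by
  unfold Dmulti
  induction List.finRange d with
  | nil => exact Commute.one_left _
  | cons i L ih => exact ((commute_pderiv_taylor x i).pow_left _).mul_left ih

theorem eval_Dmulti {d : ℕ} (x : Fin d → ℝ) (j : Fin d → ℕ) (p : MvPolynomial (Fin d) ℝ) :
    eval x (Dmulti j p)
      = (∏ i, ((j i).factorial : ℝ)) * coeff (Finsupp.equivFunOnFinite.symm j) (taylor x p) := by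
  rw [← constantCoeff_taylor, constantCoeff_eq, ← coeff_zero_Dmulti]
  exact congrArg (coeff 0) (LinearMap.congr_fun (commute_Dmulti_taylor x j).eq p).symm

theorem forall_eval_Dmulti_eq_zero_iff {d : ℕ} (x : Fin d → ℝ) (k : ℕ)
    (p : MvPolynomial (Fin d) ℝ) :
    (∀ j : Fin d → ℕ, ∑ i, j i < k → eval x (Dmulti j p) = 0) ↔
      p ∈ RingHom.ker (eval x) ^ k := by
  have hfac (j : Fin d → ℕ) : (∏ i, ((j i).factorial : ℝ)) ≠ 0 :=
    Finset.prod_ne_zero_iff.mpr fun i _ => Nat.cast_ne_zero.mpr (Nat.factorial_ne_zero _)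
  simp only [mem_ker_eval_pow_iff, mem_pow_idealOfVars_iff', eval_Dmulti, mul_eq_zero, hfac,
    false_or]
  rw [← Finsupp.equivFunOnFinite.symm.forall_congr_right]
  simp [Finsupp.degree_eq_sum]

def IsAdmissible {d : ℕ} (Θ : Matrix (Fin d) (Fin d) ℤ) : Prop :=
  (∀ r s, Θ r s = 0 ∨ Θ r s = 1) ∧ (∀ s, ∃ r, Θ r s ≠ 0) ∧ (Θ.det = 1 ∨ Θ.det = -1)

theorem eval_one_qpoly {d : ℕ} (Θ : Matrix (Fin d) (Fin d) ℤ) :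
    eval (fun _ => (1 : ℝ)) (qpoly Θ) = 1 := by
  simp only [qpoly, map_prod, map_mul, map_add, eval_C, map_one, map_pow, eval_X, one_pow,
    Finset.prod_const_one]
  norm_num

theorem eval_qpoly_eq_zero {d : ℕ} {Θ : Matrix (Fin d) (Fin d) ℤ} (hΘ : IsAdmissible Θ)
    {ε : Fin d → ℝ} (hε : ∀ i, ε i = -1 ∨ ε i = 1) (hne : ε ≠ fun _ => 1) :
    eval ε (qpoly Θ) = 0 := by
  obtain ⟨h01, -, hdet⟩ := hΘ
  classical
  set u : Fin d → ℕ := fun i => if ε i = 1 then 0 else 1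
  have hεu (i : Fin d) : ε i = (-1) ^ u i := by
    rcases hε i with h | h <;> simp [u, h]
  have hv : (fun i => (u i : ZMod 2)) ≠ 0 := by
    obtain ⟨i, hi⟩ := Function.ne_iff.mp hne
    exact Function.ne_iff.mpr ⟨i, by simp [u, hi]⟩
  -- `Θ` is invertible modulo 2, so the parity vector of `ε` has an odd product with a column
  have hdet2 : (Θ.map (Int.cast : ℤ → ZMod 2)).det ≠ 0 := by
    rw [show (Θ.map (Int.cast : ℤ → ZMod 2)).det = (Θ.det : ZMod 2) from
      ((Int.castRingHom (ZMod 2)).map_det Θ).symm]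
    rcases hdet with h | h <;> rw [h] <;> decide
  obtain ⟨c, hc⟩ : ∃ c, Matrix.vecMul (fun i => (u i : ZMod 2)) (Θ.map Int.cast) c ≠ 0 := by
    by_contra! h
    exact hdet2 (Matrix.exists_vecMul_eq_zero_iff.mp ⟨_, hv, funext h⟩)
  have hodd : Odd (∑ i, u i * (Θ i c).toNat) := by
    rw [← ZMod.natCast_ne_zero_iff_odd]
    convert hc using 1
    simp only [Matrix.vecMul, dotProduct, Matrix.map_apply, Nat.cast_sum, Nat.cast_mul]
    refine Finset.sum_congr rfl fun i _ => ?_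
    rcases h01 i c with h | h <;> simp [h]
  rw [qpoly, map_prod]
  refine Finset.prod_eq_zero (Finset.mem_univ c) ?_
  simp only [map_mul, map_add, map_one, map_prod, map_pow, eval_X, eval_C, hεu, ← pow_mul,
    Finset.prod_pow_eq_pow_sum, hodd.neg_one_pow]
  norm_num

noncomputable def admissibleIdeal (d : ℕ) : Ideal (MvPolynomial (Fin d) ℝ) :=
  Ideal.span (qpoly '' {Θ | IsAdmissible Θ})

theorem qpoly_mem_admissibleIdeal {d : ℕ} {Θ : Matrix (Fin d) (Fin d) ℤ}
    (hΘ : IsAdmissible Θ) : qpoly Θ ∈ admissibleIdeal d :=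
  Ideal.subset_span ⟨Θ, hΘ, rfl⟩

theorem map_admissibleIdeal_le_iff {d d' : ℕ}
    (f : MvPolynomial (Fin d) ℝ →+* MvPolynomial (Fin d') ℝ) (I : Ideal (MvPolynomial (Fin d') ℝ)) :
    (admissibleIdeal d).map f ≤ I ↔ ∀ Θ, IsAdmissible Θ → f (qpoly Θ) ∈ I := by
  simp [admissibleIdeal, Ideal.map_span, Ideal.span_le, Set.subset_def]

theorem IsAdmissible.submatrix {d : ℕ} {Θ : Matrix (Fin d) (Fin d) ℤ} (hΘ : IsAdmissible Θ)
    (σ : Equiv.Perm (Fin d)) : IsAdmissible (Θ.submatrix σ id) := by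
  obtain ⟨h01, hcol, hdet⟩ := hΘ
  refine ⟨fun r s => h01 _ s, fun s => ?_, ?_⟩
  · obtain ⟨r, hr⟩ := hcol s
    exact ⟨σ.symm r, by simpa using hr⟩
  · rw [Matrix.det_permute]
    rcases Int.units_eq_one_or (Equiv.Perm.sign σ) with h | h <;>
      rcases hdet with h2 | h2 <;> simp [h, h2]

theorem rename_qpoly {d : ℕ} (σ : Equiv.Perm (Fin d)) (Θ : Matrix (Fin d) (Fin d) ℤ) :
    rename σ (qpoly Θ) = qpoly (Θ.submatrix σ.symm id) := by
  simp only [qpoly, map_prod, map_mul, map_add, map_one, map_pow, rename_C, rename_X,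
    Matrix.submatrix_apply, id]
  refine Finset.prod_congr rfl fun c _ => ?_
  rw [← Equiv.prod_comp σ fun i => X i ^ (Θ (σ.symm i) c).toNat]
  simp

theorem rename_mem_admissibleIdeal {d : ℕ} (σ : Equiv.Perm (Fin d)) {p : MvPolynomial (Fin d) ℝ}
    (hp : p ∈ admissibleIdeal d) : rename σ p ∈ admissibleIdeal d := by
  have : (admissibleIdeal d).map (rename σ).toRingHom ≤ admissibleIdeal d := by
    rw [map_admissibleIdeal_le_iff]
    intro Θ hΘ
    simpa [rename_qpoly] using qpoly_mem_admissibleIdeal (hΘ.submatrix σ.symm)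
  exact this (Ideal.mem_map_of_mem _ hp)

/-- The block matrix `[[1, 0], [β, Θ]]`. -/
def extendMatrix {d : ℕ} (Θ : Matrix (Fin d) (Fin d) ℤ) (β : Fin d → ℤ) :
    Matrix (Fin (d + 1)) (Fin (d + 1)) ℤ :=
  Matrix.of fun r c =>
    Fin.cases (Matrix.vecCons 1 β r) (fun c' => Matrix.vecCons 0 (fun r' => Θ r' c') r) c

@[simp] theorem extendMatrix_zero_zero {d : ℕ} (Θ : Matrix (Fin d) (Fin d) ℤ) (β : Fin d → ℤ) :
    extendMatrix Θ β 0 0 = 1 := rfl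

@[simp] theorem extendMatrix_succ_zero {d : ℕ} (Θ : Matrix (Fin d) (Fin d) ℤ) (β : Fin d → ℤ)
    (r : Fin d) : extendMatrix Θ β r.succ 0 = β r := rfl

@[simp] theorem extendMatrix_zero_succ {d : ℕ} (Θ : Matrix (Fin d) (Fin d) ℤ) (β : Fin d → ℤ)
    (c : Fin d) : extendMatrix Θ β 0 c.succ = 0 := rfl

@[simp] theorem extendMatrix_succ_succ {d : ℕ} (Θ : Matrix (Fin d) (Fin d) ℤ) (β : Fin d → ℤ)
    (r c : Fin d) : extendMatrix Θ β r.succ c.succ = Θ r c := rfl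

theorem det_extendMatrix {d : ℕ} (Θ : Matrix (Fin d) (Fin d) ℤ) (β : Fin d → ℤ) :
    (extendMatrix Θ β).det = Θ.det := by
  have hΘ : (extendMatrix Θ β).submatrix Fin.succ Fin.succ = Θ := rfl
  rw [Matrix.det_succ_row_zero, Fin.sum_univ_succ]
  simp [hΘ]

theorem IsAdmissible.extendMatrix {d : ℕ} {Θ : Matrix (Fin d) (Fin d) ℤ} (hΘ : IsAdmissible Θ)
    {β : Fin d → ℤ} (hβ : ∀ r, β r = 0 ∨ β r = 1) : IsAdmissible (extendMatrix Θ β) := by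
  obtain ⟨h01, hcol, hdet⟩ := hΘ
  refine ⟨fun r c => ?_, fun c => ?_, by rwa [det_extendMatrix]⟩
  · induction r using Fin.cases <;> induction c using Fin.cases <;> simp [h01, hβ]
  · induction c using Fin.cases with
    | zero => exact ⟨0, by simp⟩
    | succ c =>
      obtain ⟨r, hr⟩ := hcol c
      exact ⟨r.succ, by simpa using hr⟩

theorem qpoly_extendMatrix {d : ℕ} (Θ : Matrix (Fin d) (Fin d) ℤ) (β : Fin d → ℤ) :
    qpoly (extendMatrix Θ β)
      = C (1 / 2) * (1 + X 0 * rename Fin.succ (∏ r, X r ^ (β r).toNat))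
        * rename Fin.succ (qpoly Θ) := by
  simp [qpoly, Fin.prod_univ_succ, map_prod]

theorem rename_succ_mul_mem_admissibleIdeal {d : ℕ} {p : MvPolynomial (Fin d) ℝ}
    (hp : p ∈ admissibleIdeal d) {β : Fin d → ℤ} (hβ : ∀ r, β r = 0 ∨ β r = 1) :
    rename Fin.succ p * (1 + X 0 * rename Fin.succ (∏ r, X r ^ (β r).toNat))
      ∈ admissibleIdeal (d + 1) := by
  set g : MvPolynomial (Fin (d + 1)) ℝ := 1 + X 0 * rename Fin.succ (∏ r, X r ^ (β r).toNat)
  suffices (admissibleIdeal d).map (rename Fin.succ).toRingHom ≤ (admissibleIdeal (d + 1)).colon {g}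
    from Submodule.mem_colon_singleton.mp (this (Ideal.mem_map_of_mem _ hp))
  rw [map_admissibleIdeal_le_iff]
  intro Θ hΘ
  have hq : rename Fin.succ (qpoly Θ) * g = C 2 * qpoly (extendMatrix Θ β) := by
    rw [qpoly_extendMatrix, ← mul_assoc, ← mul_assoc, ← C_mul]
    norm_num [g]
    ring
  rw [Submodule.mem_colon_singleton, smul_eq_mul, AlgHom.toRingHom_eq_coe, RingHom.coe_coe, hq]
  exact Ideal.mul_mem_left _ _ (qpoly_mem_admissibleIdeal (hΘ.extendMatrix hβ))

theorem rename_succ_mul_one_add_X_zero_mem {d : ℕ} {p : MvPolynomial (Fin d) ℝ}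
    (hp : p ∈ admissibleIdeal d) : rename Fin.succ p * (1 + X 0) ∈ admissibleIdeal (d + 1) := by
  simpa using rename_succ_mul_mem_admissibleIdeal hp (β := 0) (by simp)

theorem rename_succ_mul_one_add_X_zero_mul_X_one_mem {d : ℕ} {p : MvPolynomial (Fin (d + 1)) ℝ}
    (hp : p ∈ admissibleIdeal (d + 1)) :
    rename Fin.succ p * (1 + X 0 * X 1) ∈ admissibleIdeal (d + 2) := by
  have hβ (r : Fin (d + 1)) :
      (Pi.single 0 1 : Fin (d + 1) → ℤ) r = 0 ∨ (Pi.single 0 1 : Fin (d + 1) → ℤ) r = 1 := by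
    rcases eq_or_ne r 0 with rfl | h <;> simp [*]
  simpa [Fin.prod_univ_succ, Pi.single_apply, Fin.succ_ne_zero] using
    rename_succ_mul_mem_admissibleIdeal hp hβ

theorem isAdmissible_one (d : ℕ) : IsAdmissible (1 : Matrix (Fin d) (Fin d) ℤ) := by
  refine ⟨fun r s => ?_, fun s => ⟨s, by simp⟩, by simp⟩
  rcases eq_or_ne r s with rfl | h <;> simp [*]

theorem one_add_X_zero_mem_admissibleIdeal :
    (1 + X 0 : MvPolynomial (Fin 1) ℝ) ∈ admissibleIdeal 1 := by
  simpa [qpoly] using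
    rename_succ_mul_one_add_X_zero_mem (qpoly_mem_admissibleIdeal (isAdmissible_one 0))

theorem X_sq_sub_one_mem_of_mem {d : ℕ} {i₀ : Fin d} (h : X i₀ ^ 2 - 1 ∈ admissibleIdeal d)
    (i : Fin d) : X i ^ 2 - 1 ∈ admissibleIdeal d := by
  simpa using rename_mem_admissibleIdeal (Equiv.swap i₀ i) h

theorem X_sq_sub_one_mem_admissibleIdeal :
    ∀ (d : ℕ) (i : Fin d), (X i ^ 2 - 1 : MvPolynomial (Fin d) ℝ) ∈ admissibleIdeal d
  | 0, i => i.elim0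
  | 1, i => by
    have h := one_add_X_zero_mem_admissibleIdeal
    refine X_sq_sub_one_mem_of_mem (i₀ := 0) ?_ i
    rw [show (X 0 ^ 2 - 1 : MvPolynomial (Fin 1) ℝ) = (X 0 - 1) * (1 + X 0) by ring]
    exact Ideal.mul_mem_left _ _ h
  | 2, i => by
    have h := one_add_X_zero_mem_admissibleIdeal
    have h₀ := rename_succ_mul_one_add_X_zero_mem h
    have h₁ := rename_succ_mul_one_add_X_zero_mul_X_one_mem h
    simp only [map_add, map_one, rename_X, Fin.succ_zero_eq_one] at h₀ h₁
    refine X_sq_sub_one_mem_of_mem (i₀ := 1) ?_ i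
    rw [show (X 1 ^ 2 - 1 : MvPolynomial (Fin 2) ℝ)
        = X 1 * ((1 + X 1) * (1 + X 0)) - (1 + X 1) * (1 + X 0 * X 1) by ring]
    exact Ideal.sub_mem _ (Ideal.mul_mem_left _ _ h₀) h₁
  | d + 3, i => by
    have h := X_sq_sub_one_mem_admissibleIdeal (d + 2) 1
    have h₀ := rename_succ_mul_one_add_X_zero_mem h
    have h₁ := rename_succ_mul_one_add_X_zero_mul_X_one_mem h
    have h₂ := rename_mem_admissibleIdeal (Equiv.swap 0 1) h₀
    simp only [map_mul, map_add, map_sub, map_pow, map_one, rename_X, Fin.succ_one_eq_two,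
      Equiv.swap_apply_left] at h₀ h₁ h₂
    rw [Equiv.swap_apply_of_ne_of_ne (by rw [Ne, Fin.ext_iff, Fin.val_two]; simp)
      (by rw [Ne, Fin.ext_iff, Fin.val_two]; simp)] at h₂
    have half : (C (1 / 2) * 2 : MvPolynomial (Fin (d + 3)) ℝ) = 1 := by
      rw [← map_ofNat C 2, ← C_mul]; norm_num
    -- `1 + X 0`, `1 + X 0 * X 1` and `1 + X 1` generate the unit ideal
    refine X_sq_sub_one_mem_of_mem (i₀ := 2) ?_ i
    rw [show (X 2 ^ 2 - 1 : MvPolynomial (Fin (d + 3)) ℝ)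
        = C (1 / 2) * ((X 2 ^ 2 - 1) * (1 + X 0) + (X 2 ^ 2 - 1) * (1 + X 0 * X 1)
          - X 0 * ((X 2 ^ 2 - 1) * (1 + X 1))) by linear_combination (1 - X 2 ^ 2) * half]
    exact Ideal.mul_mem_left _ _
      (Ideal.sub_mem _ (Ideal.add_mem _ h₀ h₁) (Ideal.mul_mem_left _ _ h₂))

theorem mem_admissibleIdeal_of_eval_eq_zero {d : ℕ} {b : MvPolynomial (Fin d) ℝ}
    (hb : ∀ ε : Fin d → ℝ, (∀ i, ε i = -1 ∨ ε i = 1) → ε ≠ (fun _ => 1) → eval ε b = 0) :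
    b ∈ admissibleIdeal d := by
  -- `qpoly 1` is the indicator function of the vertex `(1, …, 1)` on the cube `{±1}^d`
  set b' := b - C (eval (fun _ => 1) b) * qpoly 1
  have hcube (x : Fin d → ℝ) (hx : ∀ i, x i ∈ ({-1, 1} : Finset ℝ)) : eval x b' = 0 := by
    simp only [Finset.mem_insert, Finset.mem_singleton] at hx
    by_cases h1 : x = fun _ => 1
    · simp [b', h1, eval_one_qpoly]
    · simp [b', hb x hx h1, eval_qpoly_eq_zero (isAdmissible_one d) hx h1]
  obtain ⟨h, -, hh⟩ := combinatorial_nullstellensatz_exists_linearCombination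
    (fun _ => {-1, 1}) (fun _ => ⟨1, by simp⟩) b' hcube
  have hb' : b' ∈ admissibleIdeal d := by
    rw [hh, Finsupp.linearCombination_apply]
    refine Ideal.sum_mem _ fun i _ => Ideal.mul_mem_left _ _ ?_
    convert X_sq_sub_one_mem_admissibleIdeal d i using 1
    rw [Finset.prod_pair (by norm_num)]
    simp only [map_neg, map_one, sub_neg_eq_add]
    ring
  simpa [b'] using Ideal.add_mem _ hb'
    (Ideal.mul_mem_left _ (C (eval (fun _ => 1) b))
      (qpoly_mem_admissibleIdeal (isAdmissible_one d)))

def ZeroCondition {d : ℕ} (k : ℕ) (a : MvPolynomial (Fin d) ℝ) : Prop :=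
  ∀ j : Fin d → ℕ, ∑ i, j i < k →
    ∀ ε : Fin d → ℝ, (∀ i, ε i = -1 ∨ ε i = 1) → ε ≠ (fun _ => 1) → eval ε (Dmulti j a) = 0

open Classical in
noncomputable def puncturedCube (d : ℕ) : Finset (Fin d → ℝ) :=
  (Fintype.piFinset fun _ => ({-1, 1} : Finset ℝ)).erase fun _ => 1

theorem mem_puncturedCube {d : ℕ} {ε : Fin d → ℝ} :
    ε ∈ puncturedCube d ↔ (∀ i, ε i = -1 ∨ ε i = 1) ∧ ε ≠ fun _ => 1 := by
  simp [puncturedCube, and_comm]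


theorem zeroCondition_iff_mem_admissibleIdeal_pow {d : ℕ} (k : ℕ) (a : MvPolynomial (Fin d) ℝ) :
    ZeroCondition k a ↔ a ∈ admissibleIdeal d ^ k := by
  constructor
  · intro h
    refine mem_pow_of_forall_mem_ker_eval_pow (puncturedCube d)
      (fun p hp => mem_admissibleIdeal_of_eval_eq_zero fun ε hε hne =>
        hp ε (mem_puncturedCube.mpr ⟨hε, hne⟩)) k fun ε hε => ?_
    obtain ⟨hε, hne⟩ := mem_puncturedCube.mp hε
    exact (forall_eval_Dmulti_eq_zero_iff ε k a).mp fun j hj => h j hj ε hε hne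
  · intro ha j hj ε hε hne
    have hJ : admissibleIdeal d ≤ RingHom.ker (eval ε) := by
      rw [admissibleIdeal, Ideal.span_le]
      rintro _ ⟨Θ, hΘ, rfl⟩
      exact eval_qpoly_eq_zero hΘ hε hne
    exact (forall_eval_Dmulti_eq_zero_iff ε k a).mpr (Ideal.pow_right_mono hJ k ha) j hj

open Classical in
noncomputable def admissibleTuples (d k : ℕ) : Finset (Fin k → Matrix (Fin d) (Fin d) ℤ) :=
  ((Fintype.piFinset fun _ => Fintype.piFinset fun _ => Fintype.piFinset fun _ => {0, 1} :
    Finset (Fin k → Fin d → Fin d → ℤ)) : Finset (Fin k → Matrix (Fin d) (Fin d) ℤ)).filter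
    fun w => ∀ i, IsAdmissible (w i)

open Classical in
theorem mem_admissibleTuples {d k : ℕ} {w : Fin k → Matrix (Fin d) (Fin d) ℤ} :
    w ∈ admissibleTuples d k ↔ ∀ i, IsAdmissible (w i) :=
  Finset.mem_filter.trans <| and_iff_right_of_imp fun h =>
    Fintype.mem_piFinset.mpr fun i => Fintype.mem_piFinset.mpr fun r =>
      Fintype.mem_piFinset.mpr fun s => by simpa using (h i).1 r s

theorem prod_qpoly_mem_admissibleIdeal_pow {d k : ℕ} {w : Fin k → Matrix (Fin d) (Fin d) ℤ}
    (hw : ∀ i, IsAdmissible (w i)) : ∏ i, qpoly (w i) ∈ admissibleIdeal d ^ k := by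
  simpa using Ideal.prod_mem_prod (s := Finset.univ) (I := fun _ => admissibleIdeal d)
    fun i _ => qpoly_mem_admissibleIdeal (hw i)

theorem exists_eq_sum_of_mem_admissibleIdeal_pow {d k : ℕ} {a : MvPolynomial (Fin d) ℝ}
    (ha : a ∈ admissibleIdeal d ^ k) :
    ∃ g : (Fin k → Matrix (Fin d) (Fin d) ℤ) → MvPolynomial (Fin d) ℝ,
      a = ∑ w ∈ admissibleTuples d k, g w * ∏ i, qpoly (w i) := by
  have hspan : admissibleIdeal d ^ k ≤
      Ideal.span ((fun w : Fin k → Matrix (Fin d) (Fin d) ℤ => ∏ i, qpoly (w i)) ''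
        admissibleTuples d k) := by
    rw [admissibleIdeal, Ideal.span, Submodule.span_pow]
    refine Submodule.span_mono fun x hx => ?_
    obtain ⟨f, rfl⟩ := Set.mem_pow.mp hx
    choose w hw using fun i => (f i).2
    refine ⟨w, mem_admissibleTuples.mpr fun i => (hw i).1, ?_⟩
    simp [List.prod_ofFn, (hw _).2]
  obtain ⟨g, hg⟩ := (Submodule.mem_span_image_finset_iff_exists_fun' _).mp (hspan ha)
  exact ⟨g, hg.symm⟩

theorem stmt_12_general (d k : ℕ) (a : MvPolynomial (Fin d) ℝ)
    (h1 : eval (fun _ => (1 : ℝ)) a = 2 ^ d) :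
    (∀ j : Fin d → ℕ, (∑ i, j i) < k →
      ∀ ε : Fin d → ℝ, (∀ i, ε i = -1 ∨ ε i = 1) → ε ≠ (fun _ => 1) →
        eval ε (Dmulti j a) = 0) ↔
    ∃ (S : Finset (Fin k → Matrix (Fin d) (Fin d) ℤ))
      (c : (Fin k → Matrix (Fin d) (Fin d) ℤ) → MvPolynomial (Fin d) ℝ),
      (∀ w, w ∈ S ↔ ∀ i : Fin k,
        ((∀ r s, w i r s = 0 ∨ w i r s = 1) ∧
         (∀ s, ∃ r, w i r s ≠ 0) ∧
         ((w i).det = 1 ∨ (w i).det = -1))) ∧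
      a = ∑ w ∈ S, c w * (2 : MvPolynomial (Fin d) ℝ) ^ d * ∏ i : Fin k, qpoly (w i) ∧
      (∑ w ∈ S, eval (fun _ => (1 : ℝ)) (c w)) = 1 := by
  refine (zeroCondition_iff_mem_admissibleIdeal_pow k a).trans ⟨fun ha => ?_, ?_⟩
  · obtain ⟨g, rfl⟩ := exists_eq_sum_of_mem_admissibleIdeal_pow ha
    have h2 : (C ((2 : ℝ) ^ d)⁻¹ * 2 ^ d : MvPolynomial (Fin d) ℝ) = 1 := by
      rw [← map_ofNat C 2, ← map_pow, ← C_mul, inv_mul_cancel₀ (by positivity), C_1]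
    refine ⟨admissibleTuples d k, fun w => C ((2 : ℝ) ^ d)⁻¹ * g w,
      fun w => mem_admissibleTuples, Finset.sum_congr rfl fun w _ => ?_, ?_⟩
    · linear_combination (-(g w * ∏ i, qpoly (w i))) * h2
    · simp only [map_sum, map_mul, map_prod, eval_one_qpoly, Finset.prod_const_one, mul_one]
        at h1
      simp only [map_mul, eval_C, ← Finset.mul_sum, h1]
      exact inv_mul_cancel₀ (by positivity)
  · rintro ⟨S, c, hS, rfl, -⟩
    exact Ideal.sum_mem _ fun w hw =>
      Ideal.mul_mem_left _ _ (prod_qpoly_mem_admissibleIdeal_pow ((hS w).mp hw))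

/-- Theorem B (algebraic form): a polynomial `a` with `a(1,…,1) = 2^d` satisfies the zero
condition of order `k` iff `a = Σ_w c_w · 2^d · ∏_{i<k} q_{w i}` with `Σ_w c_w(1,…,1) = 1`,
where `w` ranges over the `k`-tuples of `d×d` integer matrices with nonzero 0-1 columns
and determinant `±1`. -/
theorem stmt_12 (d k : ℕ) (hd : 1 ≤ d) (hk : 1 ≤ k) (a : MvPolynomial (Fin d) ℝ)
    (h1 : eval (fun _ => (1 : ℝ)) a = 2 ^ d) :
    (∀ j : Fin d → ℕ, (∑ i, j i) < k →
      ∀ ε : Fin d → ℝ, (∀ i, ε i = -1 ∨ ε i = 1) → ε ≠ (fun _ => 1) →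
        eval ε (Dmulti j a) = 0) ↔
    ∃ (S : Finset (Fin k → Matrix (Fin d) (Fin d) ℤ))
      (c : (Fin k → Matrix (Fin d) (Fin d) ℤ) → MvPolynomial (Fin d) ℝ),
      (∀ w, w ∈ S ↔ ∀ i : Fin k,
        ((∀ r s, w i r s = 0 ∨ w i r s = 1) ∧
         (∀ s, ∃ r, w i r s ≠ 0) ∧
         ((w i).det = 1 ∨ (w i).det = -1))) ∧
      a = ∑ w ∈ S, c w * (2 : MvPolynomial (Fin d) ℝ) ^ d * ∏ i : Fin k, qpoly (w i) ∧
      (∑ w ∈ S, eval (fun _ => (1 : ℝ)) (c w)) = 1 :=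
  stmt_12_general d k a h1
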